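/- In the group G_n (n ≥ 1) defined by gluing surface groups H_i along boundary curves via d_j^{t_j} = c_{j+1}, there is no free product decomposition G_n = K * L with a_0, b_0, c_0 ∈ K and a_n, b_n, c_n ∈ L. -/

import Mathlib

/-- Generators of `Gₙ`: quadruples `aᵢ, bᵢ, cᵢ, dᵢ` for `0 ≤ i ≤ n`
(encoded as `Fin (n+1) × Fin 4`) together with stable letters `tⱼ` for `0 ≤ j ≤ n-1`. -/
def GGen (n : ℕ) : Type := (Fin (n + 1) × Fin 4) ⊕ Fin n

open scoped commutatorElement

/-- The relations of `Gₙ`: `cᵢ dᵢ [aᵢ, bᵢ] = 1` for `0 ≤ i ≤ n` and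
`tⱼ⁻¹ dⱼ tⱼ = c_{j+1}` for `0 ≤ j ≤ n - 1`. -/
def GRels (n : ℕ) : Set (FreeGroup (GGen n)) :=
  {r | (∃ i : Fin (n + 1),
          r = FreeGroup.of ((Sum.inl (i, 2)) : GGen n) * FreeGroup.of ((Sum.inl (i, 3)) : GGen n) *
              ⁅FreeGroup.of ((Sum.inl (i, 0)) : GGen n), FreeGroup.of ((Sum.inl (i, 1)) : GGen n)⁆) ∨
       (∃ j : Fin n,
          r = (FreeGroup.of ((Sum.inr j) : GGen n))⁻¹ * FreeGroup.of ((Sum.inl (j.castSucc, 3)) : GGen n) *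
              FreeGroup.of ((Sum.inr j) : GGen n) * (FreeGroup.of ((Sum.inl (j.succ, 2)) : GGen n))⁻¹)}

/-- The group `Gₙ`, obtained by gluing the surface groups
`Hᵢ = ⟨cᵢ, dᵢ, aᵢ, bᵢ ∣ cᵢ dᵢ [aᵢ, bᵢ] = 1⟩`, `0 ≤ i ≤ n`,
along boundary curves via `dⱼ^{tⱼ} = c_{j+1}`, `0 ≤ j ≤ n-1`. -/
abbrev GGrp (n : ℕ) : Type := PresentedGroup (GRels n)

/-- The generator `aᵢ` of `Gₙ`. -/
def Ga (n : ℕ) (i : Fin (n + 1)) : GGrp n := PresentedGroup.of ((Sum.inl (i, 0)) : GGen n)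

/-- The generator `bᵢ` of `Gₙ`. -/
def Gb (n : ℕ) (i : Fin (n + 1)) : GGrp n := PresentedGroup.of ((Sum.inl (i, 1)) : GGen n)

/-- The generator `cᵢ` of `Gₙ`. -/
def Gc (n : ℕ) (i : Fin (n + 1)) : GGrp n := PresentedGroup.of ((Sum.inl (i, 2)) : GGen n)

/-- The generator `dᵢ` of `Gₙ`. -/
def Gd (n : ℕ) (i : Fin (n + 1)) : GGrp n := PresentedGroup.of ((Sum.inl (i, 3)) : GGen n)

/-- The stable letter `tⱼ` of `Gₙ`. -/
def Gt (n : ℕ) (j : Fin n) : GGrp n := PresentedGroup.of ((Sum.inr j) : GGen n)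

/-- The canonical copy of the surface group `Hᵢ` inside `Gₙ`,
generated by `aᵢ, bᵢ, cᵢ, dᵢ`. -/
def Hsub (n : ℕ) (i : Fin (n + 1)) : Subgroup (GGrp n) :=
  Subgroup.closure {Ga n i, Gb n i, Gc n i, Gd n i}

/-- `G` is the internal free product of its subgroups `A` and `B`. -/
def IsFreeProd {G : Type*} [Group G] (A B : Subgroup G) : Prop :=
  Function.Bijective (Monoid.Coprod.lift A.subtype B.subtype)

/-- `A` is a free factor of `G`. -/
def IsFreeFactor {G : Type*} [Group G] (A : Subgroup G) : Prop :=
  ∃ B : Subgroup G, IsFreeProd A B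

/-- `G` is the internal free product of its subgroups `A`, `B` and `C`. -/
def IsFreeProd3 {G : Type*} [Group G] (A B C : Subgroup G) : Prop :=
  Function.Bijective (Monoid.CoprodI.lift (fun i : Fin 3 => (![A, B, C] i).subtype))

/-!
Every homomorphism `ψ` from `Gₙ` to an abelian group satisfies `ψ dᵢ = (ψ cᵢ)⁻¹` and
`ψ dⱼ = ψ c_{j+1}`, so `ψ cₙ = (ψ c₀)^{±1}`; in particular `ψ c₀ = 1` as soon as `ψ cₙ = 1`.
A decomposition `Gₙ = K * L` would give such a `ψ` that is trivial on `L ∋ cₙ` and agrees on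
`K ∋ c₀` with the character `Gₙ → ℤ/2` sending every `cᵢ, dᵢ` to `1` and `aᵢ, bᵢ, tⱼ` to `0`.
-/

theorem IsFreeProd.exists_lift {G M : Type*} [Group G] [Monoid M] {K L : Subgroup G}
    (h : IsFreeProd K L) (f : K →* M) (g : L →* M) :
    ∃ χ : G →* M, χ.comp K.subtype = f ∧ χ.comp L.subtype = g := by
  set e := MulEquiv.ofBijective _ h
  refine ⟨(Monoid.Coprod.lift f g).comp e.symm.toMonoidHom, ?_, ?_⟩
  · ext x
    have hx : e.symm x = Monoid.Coprod.inl x :=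
      e.symm_apply_eq.mpr (Monoid.Coprod.lift_apply_inl K.subtype L.subtype x).symm
    simp [hx]
  · ext y
    have hy : e.symm y = Monoid.Coprod.inr y :=
      e.symm_apply_eq.mpr (Monoid.Coprod.lift_apply_inr K.subtype L.subtype y).symm
    simp [hy]

theorem Gc_mul_Gd_mul_commutator (n : ℕ) (i : Fin (n + 1)) :
    Gc n i * Gd n i * ⁅Ga n i, Gb n i⁆ = 1 :=
  PresentedGroup.one_of_mem (Or.inl ⟨i, rfl⟩)

theorem Gt_inv_mul_Gd_mul_Gt (n : ℕ) (j : Fin n) :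
    (Gt n j)⁻¹ * Gd n j.castSucc * Gt n j = Gc n j.succ :=
  mul_inv_eq_one.mp (PresentedGroup.one_of_mem (Or.inr ⟨j, rfl⟩))

section CommGroup

variable {M : Type*} [CommGroup M] {n : ℕ} (ψ : GGrp n →* M)

theorem map_Gd_eq_inv_map_Gc (i : Fin (n + 1)) : ψ (Gd n i) = (ψ (Gc n i))⁻¹ := by
  have h := congrArg ψ (Gc_mul_Gd_mul_commutator n i)
  rw [map_mul, map_mul, map_commutatorElement, commutatorElement_eq_one_iff_commute.mpr
    (Commute.all _ _), mul_one, map_one] at h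
  exact eq_inv_of_mul_eq_one_right h

theorem map_Gc_succ (j : Fin n) : ψ (Gc n j.succ) = (ψ (Gc n j.castSucc))⁻¹ := by
  rw [← Gt_inv_mul_Gd_mul_Gt, map_mul, map_mul, map_inv, mul_comm, ← mul_assoc,
    mul_inv_cancel, one_mul, map_Gd_eq_inv_map_Gc]

theorem map_Gc_eq_one_iff (i : Fin (n + 1)) : ψ (Gc n i) = 1 ↔ ψ (Gc n 0) = 1 := by
  induction i using Fin.induction with
  | zero => rfl
  | succ j ih => rw [map_Gc_succ, inv_eq_one, ih]

end CommGroup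

-- Typed on the unfolded `GGen n`, the type over which the words of `GRels n` are elaborated.
def boundaryParityGen (n : ℕ) : (Fin (n + 1) × Fin 4) ⊕ Fin n → Multiplicative (ZMod 2)
  | Sum.inl (_, k) => if k = 2 ∨ k = 3 then Multiplicative.ofAdd 1 else 1
  | Sum.inr _ => 1

theorem boundaryParityGen_rels (n : ℕ) :
    ∀ r ∈ GRels n, FreeGroup.lift (boundaryParityGen n) r = 1 := by
  rintro r (⟨i, rfl⟩ | ⟨j, rfl⟩)
  · simp only [map_mul, map_inv, FreeGroup.lift_apply_of, boundaryParityGen, commutatorElement_def]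
    decide
  · simp only [map_mul, map_inv, FreeGroup.lift_apply_of, boundaryParityGen]
    decide

def boundaryParity (n : ℕ) : GGrp n →* Multiplicative (ZMod 2) :=
  PresentedGroup.toGroup (boundaryParityGen_rels n)

theorem boundaryParity_Gc_ne_one (n : ℕ) (i : Fin (n + 1)) : boundaryParity n (Gc n i) ≠ 1 :=
  (PresentedGroup.toGroup.of (boundaryParityGen_rels n)).trans_ne <| by
    simp only [boundaryParityGen]
    decide

theorem no_free_decomposition_separating_ends_general (n : ℕ) :
    ¬ ∃ K L : Subgroup (GGrp n), IsFreeProd K L ∧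
        Ga n 0 ∈ K ∧ Gb n 0 ∈ K ∧ Gc n 0 ∈ K ∧
        Ga n (Fin.last n) ∈ L ∧ Gb n (Fin.last n) ∈ L ∧ Gc n (Fin.last n) ∈ L := by
  rintro ⟨K, L, hKL, -, -, hc₀, -, -, hcₙ⟩
  obtain ⟨χ, hχK, hχL⟩ := hKL.exists_lift ((boundaryParity n).comp K.subtype) 1
  have hχc₀ : χ (Gc n 0) = boundaryParity n (Gc n 0) := DFunLike.congr_fun hχK ⟨_, hc₀⟩
  have hχcₙ : χ (Gc n (Fin.last n)) = 1 := DFunLike.congr_fun hχL ⟨_, hcₙ⟩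
  exact boundaryParity_Gc_ne_one n 0 (hχc₀ ▸ (map_Gc_eq_one_iff χ _).mp hχcₙ)

/-- There is no free product decomposition `Gₙ = K * L` with `a₀, b₀, c₀ ∈ K` and
`aₙ, bₙ, cₙ ∈ L`. -/
theorem no_free_decomposition_separating_ends (n : ℕ) (hn : 1 ≤ n) :
    ¬ ∃ K L : Subgroup (GGrp n), IsFreeProd K L ∧
        Ga n 0 ∈ K ∧ Gb n 0 ∈ K ∧ Gc n 0 ∈ K ∧
        Ga n (Fin.last n) ∈ L ∧ Gb n (Fin.last n) ∈ L ∧ Gc n (Fin.last n) ∈ L :=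
  no_free_decomposition_separating_ends_general n
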